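/- Let A be a finite nonempty set of points in ℝ², let η > 0, and let p₁, p₂ ∈ A satisfy ‖p₁ − p₂‖ < η/2. Then in every optimal partition of (A, η), the points p₁ and p₂ lie in the same cluster. -/

import Mathlib

noncomputable section

/-- The Euclidean plane. -/
abbrev Plane := EuclideanSpace ℝ (Fin 2)

/-- Perimeter of a bounded set via Cauchy's formula. -/
noncomputable def perim (C : Set Plane) : ℝ :=
  ∫ θ in (0:ℝ)..(2 * Real.pi),
    sSup ((fun p : Plane => p 0 * Real.cos θ + p 1 * Real.sin θ) '' C)

/-- `P` is a partition of `A` into nonempty clusters. -/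
def IsPartition (A : Set Plane) (P : Finset (Set Plane)) : Prop :=
  (∀ C ∈ P, (C : Set Plane).Nonempty) ∧
  (⋃₀ (P : Set (Set Plane)) = A) ∧
  ((P : Set (Set Plane)).PairwiseDisjoint id)

/-- Cost of a partition with opening cost `η` per cluster. -/
noncomputable def cost (η : ℝ) (P : Finset (Set Plane)) : ℝ :=
  η * P.card + ∑ C ∈ P, perim C

/-- `P` is an optimal partition for `(A, η)`. -/
def IsOptimalPartition (η : ℝ) (A : Set Plane) (P : Finset (Set Plane)) : Prop :=
  IsPartition A P ∧ ∀ Q : Finset (Set Plane), IsPartition A Q → cost η P ≤ cost η Q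

/-- `A` is indivisible for `η`: the one-block partition `{A}` is optimal. -/
def Indivisible (η : ℝ) (A : Set Plane) : Prop :=
  IsOptimalPartition η A {A}

/-- A maximal optimal partition of `(A, η)`. -/
def IsMaximalOptimal (η : ℝ) (A : Set Plane) (P : Finset (Set Plane)) : Prop :=
  IsOptimalPartition η A P ∧
  ¬ ∃ Q : Finset (Set Plane), IsOptimalPartition η A Q ∧ Q.card < P.card ∧
      ∀ C ∈ P, ∃ C' ∈ Q, C ⊆ C'

/-! If `p₁` and `p₂` were in different clusters `C₁` and `C₂`, merge them. The support function
`h` of `C₁ ∪ C₂` is the maximum of those of `C₁` and `C₂`, which is pointwise at most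
`h_{C₁} + h_{C₂} + h_{p₁,p₂} - ⟪p₁, u_θ⟫ - ⟪p₂, u_θ⟫`. The linear terms integrate to zero over a
period, so `perim (C₁ ∪ C₂) ≤ perim C₁ + perim C₂ + 2 ‖p₁ - p₂‖`: merging saves the opening cost
`η` and adds less than `η` of perimeter, contradicting optimality. -/

open Real

lemma integral_max_zero_cos_period (c : ℝ) :
    ∫ θ in c..c + 2 * π, max 0 (cos θ) = 2 := by
  have hper : Function.Periodic (fun θ => max 0 (cos θ)) (2 * π) := fun θ => by
    simp only [cos_add_two_pi]
  have hint : ∀ a b : ℝ, IntervalIntegrable (fun θ => max 0 (cos θ)) MeasureTheory.volume a b :=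
    fun a b => (continuous_const.max continuous_cos).intervalIntegrable a b
  have hpos : ∫ θ in -(π / 2)..π / 2, max 0 (cos θ) = 2 := by
    rw [intervalIntegral.integral_congr (g := cos), integral_cos]
    · simp only [sin_neg, sin_pi_div_two]; norm_num
    · intro θ hθ
      rw [Set.uIcc_of_le (by linarith [pi_pos])] at hθ
      exact max_eq_right (cos_nonneg_of_mem_Icc hθ)
  have hneg : ∫ θ in π / 2..π / 2 + π, max 0 (cos θ) = 0 := by
    rw [intervalIntegral.integral_congr (g := fun _ => (0 : ℝ)), intervalIntegral.integral_zero]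
    intro θ hθ
    rw [Set.uIcc_of_le (by linarith [pi_pos])] at hθ
    exact max_eq_left (cos_nonpos_of_pi_div_two_le_of_le hθ.1 (by linarith [hθ.2]))
  rw [hper.intervalIntegral_add_eq c (-(π / 2)),
    ← intervalIntegral.integral_add_adjacent_intervals (hint _ (π / 2)) (hint _ _), hpos,
    show -(π / 2) + 2 * π = π / 2 + π by ring, hneg, add_zero]

lemma exists_mul_cos_add_mul_sin_eq (a b : ℝ) :
    ∃ φ, ∀ θ, a * cos θ + b * sin θ = √(a ^ 2 + b ^ 2) * cos (θ - φ) := by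
  set z : ℂ := ⟨a, b⟩
  have hnorm : ‖z‖ = √(a ^ 2 + b ^ 2) := by
    rw [Complex.norm_def, Complex.normSq_mk]; ring_nf
  rcases eq_or_ne z 0 with hz | hz
  · have ha : a = 0 := congrArg Complex.re hz
    have hb : b = 0 := congrArg Complex.im hz
    exact ⟨0, fun θ => by simp [ha, hb]⟩
  refine ⟨z.arg, fun θ => ?_⟩
  have hr : ‖z‖ ≠ 0 := norm_ne_zero_iff.mpr hz
  rw [cos_sub, Complex.cos_arg hz, Complex.sin_arg, ← hnorm]
  field_simp
  simp only [z]; ring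

lemma integral_max_zero_mul_cos_add_mul_sin (a b : ℝ) :
    ∫ θ in 0..2 * π, max 0 (a * cos θ + b * sin θ) = 2 * √(a ^ 2 + b ^ 2) := by
  obtain ⟨φ, hφ⟩ := exists_mul_cos_add_mul_sin_eq a b
  have hscale : ∀ θ, max 0 (√(a ^ 2 + b ^ 2) * cos (θ - φ))
      = √(a ^ 2 + b ^ 2) * max 0 (cos (θ - φ)) := fun θ => by
    rw [mul_max_of_nonneg _ _ (sqrt_nonneg _), mul_zero]
  simp_rw [hφ, hscale, intervalIntegral.integral_const_mul, intervalIntegral.integral_comp_sub_right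
      (fun θ => max 0 (cos θ)),
    show 2 * π - φ = 0 - φ + 2 * π by ring, integral_max_zero_cos_period]
  ring

def dirComp (θ : ℝ) (p : Plane) : ℝ := p 0 * cos θ + p 1 * sin θ

def supportFun (C : Set Plane) (θ : ℝ) : ℝ := sSup (dirComp θ '' C)

lemma perim_eq_integral_supportFun (C : Set Plane) :
    perim C = ∫ θ in 0..2 * π, supportFun C θ := rfl

@[fun_prop]
lemma continuous_dirComp_left (p : Plane) : Continuous fun θ => dirComp θ p := by
  unfold dirComp; fun_prop

lemma integral_dirComp (p : Plane) : ∫ θ in 0..2 * π, dirComp θ p = 0 := by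
  simp only [dirComp]
  rw [intervalIntegral.integral_add
      ((by fun_prop : Continuous fun θ => p 0 * cos θ).intervalIntegrable _ _)
      ((by fun_prop : Continuous fun θ => p 1 * sin θ).intervalIntegrable _ _)]
  simp [integral_cos, integral_sin]

lemma Set.Finite.continuous_supportFun {C : Set Plane} (hC : C.Finite) (hne : C.Nonempty) :
    Continuous (supportFun C) := by
  have hne' : hC.toFinset.Nonempty := hC.toFinset_nonempty.mpr hne
  have : supportFun C = fun θ => hC.toFinset.sup' hne' fun p => dirComp θ p := by
    ext θ
    rw [Finset.sup'_eq_csSup_image, supportFun, Set.Finite.coe_toFinset]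
  rw [this]
  exact Continuous.finset_sup'_apply hne' fun p _ => continuous_dirComp_left p

lemma Set.Finite.dirComp_le_supportFun {C : Set Plane} (hC : C.Finite) {p : Plane} (hp : p ∈ C)
    (θ : ℝ) : dirComp θ p ≤ supportFun C θ :=
  le_csSup (hC.image _).bddAbove (Set.mem_image_of_mem _ hp)

lemma supportFun_union {C₁ C₂ : Set Plane} (h₁ : C₁.Finite) (h₂ : C₂.Finite)
    (hne₁ : C₁.Nonempty) (hne₂ : C₂.Nonempty) (θ : ℝ) :
    supportFun (C₁ ∪ C₂) θ = max (supportFun C₁ θ) (supportFun C₂ θ) := by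
  rw [supportFun, Set.image_union, csSup_union (h₁.image _).bddAbove (hne₁.image _)
    (h₂.image _).bddAbove (hne₂.image _)]
  rfl

lemma supportFun_pair (p q : Plane) (θ : ℝ) :
    supportFun {p, q} θ = max (dirComp θ p) (dirComp θ q) := by
  rw [supportFun, Set.image_pair, csSup_pair]

lemma perim_pair (p q : Plane) : perim {p, q} = 2 * dist p q := by
  have hmax : ∀ θ, supportFun {p, q} θ
      = dirComp θ p + max 0 ((q 0 - p 0) * cos θ + (q 1 - p 1) * sin θ) := fun θ => by
    rw [supportFun_pair, ← max_add_add_left, add_zero]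
    congr 1; simp only [dirComp]; ring
  have hdist : dist p q = √((q 0 - p 0) ^ 2 + (q 1 - p 1) ^ 2) := by
    rw [dist_comm, EuclideanSpace.dist_eq, Fin.sum_univ_two, Real.dist_eq, Real.dist_eq, sq_abs,
      sq_abs]
  rw [perim_eq_integral_supportFun, funext hmax, intervalIntegral.integral_add
      ((continuous_dirComp_left p).intervalIntegrable _ _)
      ((continuous_const.max (by fun_prop)).intervalIntegrable _ _),
    integral_dirComp, integral_max_zero_mul_cos_add_mul_sin, hdist, zero_add]

lemma supportFun_union_le {C₁ C₂ : Set Plane} (h₁ : C₁.Finite) (h₂ : C₂.Finite)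
    {p₁ p₂ : Plane} (hp₁ : p₁ ∈ C₁) (hp₂ : p₂ ∈ C₂) (θ : ℝ) :
    supportFun (C₁ ∪ C₂) θ ≤ supportFun C₁ θ + supportFun C₂ θ + supportFun {p₁, p₂} θ
      - dirComp θ p₁ - dirComp θ p₂ := by
  have hle₁ := h₁.dirComp_le_supportFun hp₁ θ
  have hle₂ := h₂.dirComp_le_supportFun hp₂ θ
  rw [supportFun_union h₁ h₂ ⟨p₁, hp₁⟩ ⟨p₂, hp₂⟩, supportFun_pair]
  refine max_le ?_ ?_ <;> linarith [le_max_left (dirComp θ p₁) (dirComp θ p₂),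
    le_max_right (dirComp θ p₁) (dirComp θ p₂)]

lemma perim_union_le_add_perim_pair {C₁ C₂ : Set Plane} (h₁ : C₁.Finite) (h₂ : C₂.Finite)
    {p₁ p₂ : Plane} (hp₁ : p₁ ∈ C₁) (hp₂ : p₂ ∈ C₂) :
    perim (C₁ ∪ C₂) ≤ perim C₁ + perim C₂ + perim {p₁, p₂} := by
  have hc₁ := h₁.continuous_supportFun ⟨p₁, hp₁⟩
  have hc₂ := h₂.continuous_supportFun ⟨p₂, hp₂⟩
  have hc₁₂ := (Set.toFinite {p₁, p₂}).continuous_supportFun (Set.insert_nonempty _ _)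
  have hc := (h₁.union h₂).continuous_supportFun ⟨p₁, Or.inl hp₁⟩
  simp only [perim_eq_integral_supportFun]
  calc ∫ θ in 0..2 * π, supportFun (C₁ ∪ C₂) θ
      ≤ ∫ θ in 0..2 * π, (supportFun C₁ θ + supportFun C₂ θ + supportFun {p₁, p₂} θ
          - dirComp θ p₁ - dirComp θ p₂) :=
        intervalIntegral.integral_mono (by positivity) (hc.intervalIntegrable _ _)
          ((by fun_prop : Continuous fun θ => supportFun C₁ θ + supportFun C₂ θ
            + supportFun {p₁, p₂} θ - dirComp θ p₁ - dirComp θ p₂).intervalIntegrable _ _)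
          (supportFun_union_le h₁ h₂ hp₁ hp₂)
    _ = _ := by
        rw [intervalIntegral.integral_sub, intervalIntegral.integral_sub,
          intervalIntegral.integral_add, intervalIntegral.integral_add, integral_dirComp,
          integral_dirComp, sub_zero, sub_zero] <;>
        exact Continuous.intervalIntegrable (by fun_prop) _ _

lemma Finset.coe_eq_insert_insert_erase_erase {α : Type*} [DecidableEq α] {s : Finset α}
    {a b : α} (ha : a ∈ s) (hb : b ∈ s) (hab : a ≠ b) :
    (s : Set α) = insert a (insert b ↑((s.erase a).erase b)) := by
  rw [← Finset.coe_insert, ← Finset.coe_insert,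
    Finset.insert_erase (Finset.mem_erase.2 ⟨hab.symm, hb⟩), Finset.insert_erase ha]

def mergeClusters (P : Finset (Set Plane)) (C₁ C₂ : Set Plane) : Finset (Set Plane) :=
  insert (C₁ ∪ C₂) ((P.erase C₁).erase C₂)

namespace IsPartition

variable {A : Set Plane} {P : Finset (Set Plane)} {C₁ C₂ : Set Plane}

lemma exists_mem (hP : IsPartition A P) {x : Plane} (hx : x ∈ A) : ∃ C ∈ P, x ∈ C := by
  rw [← hP.2.1] at hx
  simpa using hx

lemma subset (hP : IsPartition A P) {C : Set Plane} (hC : C ∈ P) : C ⊆ A :=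
  hP.2.1 ▸ Set.subset_sUnion_of_mem hC

lemma union_notMem_erase_erase (hP : IsPartition A P) (h₁ : C₁ ∈ P) :
    C₁ ∪ C₂ ∉ (P.erase C₁).erase C₂ := by
  intro hmem
  obtain ⟨x, hx⟩ := hP.1 C₁ h₁
  obtain ⟨-, hne, hmemP⟩ := by simpa only [Finset.mem_erase] using hmem
  exact Set.disjoint_left.1 (hP.2.2 h₁ hmemP (Ne.symm hne)) hx (Or.inl hx)

lemma merge (hP : IsPartition A P) (h₁ : C₁ ∈ P) (h₂ : C₂ ∈ P) (hne : C₁ ≠ C₂) :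
    IsPartition A (mergeClusters P C₁ C₂) := by
  obtain ⟨hPne, hPunion, hPdisj⟩ := hP
  have hdecomp := Finset.coe_eq_insert_insert_erase_erase h₁ h₂ hne
  refine ⟨?_, ?_, ?_⟩
  · intro C hC
    rcases Finset.mem_insert.1 hC with rfl | hC
    · exact (hPne C₁ h₁).mono Set.subset_union_left
    · exact hPne C (Finset.mem_of_mem_erase (Finset.mem_of_mem_erase hC))
  · rw [← hPunion, hdecomp, mergeClusters, Finset.coe_insert, Set.sUnion_insert,
      Set.sUnion_insert, Set.sUnion_insert, Set.union_assoc]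
  · rw [hdecomp, Set.pairwiseDisjoint_insert, Set.pairwiseDisjoint_insert] at hPdisj
    obtain ⟨⟨hRdisj, hdisj₂⟩, hdisj₁⟩ := hPdisj
    rw [mergeClusters, Finset.coe_insert, Set.pairwiseDisjoint_insert]
    refine ⟨hRdisj, fun D hD _ => Disjoint.union_left ?_ ?_⟩
    all_goals
      have hD' := Finset.mem_coe.1 hD
      simp only [Finset.mem_erase] at hD'
    · exact hdisj₁ D (Set.mem_insert_of_mem _ hD) (Ne.symm hD'.2.1)
    · exact hdisj₂ D hD (Ne.symm hD'.1)

lemma cost_mergeClusters (hP : IsPartition A P) (h₁ : C₁ ∈ P) (h₂ : C₂ ∈ P) (hne : C₁ ≠ C₂)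
    (η : ℝ) : cost η (mergeClusters P C₁ C₂) + η + perim C₁ + perim C₂
      = cost η P + perim (C₁ ∪ C₂) := by
  have h₂' : C₂ ∈ P.erase C₁ := Finset.mem_erase.2 ⟨hne.symm, h₂⟩
  have hcard : ((P.erase C₁).erase C₂).card + 1 + 1 = P.card := by
    rw [Finset.card_erase_add_one h₂', Finset.card_erase_add_one h₁]
  have hsum₁ := Finset.add_sum_erase _ perim h₁
  have hsum₂ := Finset.add_sum_erase _ perim h₂'
  rw [cost, cost, mergeClusters, Finset.card_insert_of_notMem (hP.union_notMem_erase_erase h₁),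
    Finset.sum_insert (hP.union_notMem_erase_erase h₁), ← hcard]
  push_cast
  linarith

end IsPartition

theorem close_points_same_cluster_general
    (A : Set Plane) (hA : A.Finite) (η : ℝ)
    (p₁ p₂ : Plane) (hp₁ : p₁ ∈ A) (hp₂ : p₂ ∈ A)
    (hclose : dist p₁ p₂ < η / 2)
    (P : Finset (Set Plane)) (hP : IsOptimalPartition η A P) :
    ∃ C ∈ P, p₁ ∈ C ∧ p₂ ∈ C := by
  obtain ⟨hpart, hopt⟩ := hP
  obtain ⟨C₁, h₁, hp₁C₁⟩ := hpart.exists_mem hp₁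
  obtain ⟨C₂, h₂, hp₂C₂⟩ := hpart.exists_mem hp₂
  by_cases hne : C₁ = C₂
  · exact ⟨C₁, h₁, hp₁C₁, hne ▸ hp₂C₂⟩
  have hmerge := hpart.cost_mergeClusters h₁ h₂ hne η
  have hperim := perim_union_le_add_perim_pair (hA.subset (hpart.subset h₁))
    (hA.subset (hpart.subset h₂)) hp₁C₁ hp₂C₂
  rw [perim_pair] at hperim
  linarith [hopt _ (hpart.merge h₁ h₂ hne)]

/-- two points at distance less than η/2 lie in the same cluster
of every optimal partition. -/
theorem close_points_same_cluster
    (A : Set Plane) (hA : A.Finite) (hAne : A.Nonempty) (η : ℝ) (hη : 0 < η)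
    (p₁ p₂ : Plane) (hp₁ : p₁ ∈ A) (hp₂ : p₂ ∈ A)
    (hclose : dist p₁ p₂ < η / 2)
    (P : Finset (Set Plane)) (hP : IsOptimalPartition η A P) :
    ∃ C ∈ P, p₁ ∈ C ∧ p₂ ∈ C :=
  close_points_same_cluster_general A hA η p₁ p₂ hp₁ hp₂ hclose P hP

end
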